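/- arXiv:1709.02105 — 2 statements merged into one kernel-verified Lean document; each statement's English description precedes it below -/
import Mathlib

section
/- There exist a social network model SN (whose knowledge bases satisfy knowledge consistency and self-awareness), an agent i ∈ Ag, and a KBL formula φ such that SN does not satisfy ¬K_i φ → K_i ¬K_i φ; that is, the negative-introspection axiom A5 is not sound with respect to SNMs. -/
/-- KBL formulas: atomic predicates (predicate symbol applied to terms of the
finite domain, folded into the type `Pred`), connection atoms, action atoms,
negation, conjunction and knowledge modalities. -/
inductive Formula (Ag Pred Conn Act : Type) : Type
  | atom : Pred → Formula Ag Pred Conn Act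
  | conn : Conn → Ag → Ag → Formula Ag Pred Conn Act
  | act  : Act → Ag → Ag → Formula Ag Pred Conn Act
  | neg  : Formula Ag Pred Conn Act → Formula Ag Pred Conn Act
  | and  : Formula Ag Pred Conn Act → Formula Ag Pred Conn Act → Formula Ag Pred Conn Act
  | know : Ag → Formula Ag Pred Conn Act → Formula Ag Pred Conn Act
  deriving DecidableEq

variable {Ag Pred Conn Act : Type}

/-- Material implication, encoded classically. -/
def Formula.imp (φ ψ : Formula Ag Pred Conn Act) : Formula Ag Pred Conn Act :=
  Formula.neg (Formula.and φ (Formula.neg ψ))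

/-- Propositional formulas, used to define substitution instances of
propositional tautologies (axiom A1). -/
inductive PropForm : Type
  | var : ℕ → PropForm
  | neg : PropForm → PropForm
  | and : PropForm → PropForm → PropForm

def PropForm.eval (v : ℕ → Bool) : PropForm → Bool
  | .var n => v n
  | .neg p => !(p.eval v)
  | .and p q => p.eval v && q.eval v

/-- A propositional tautology. -/
def PropForm.Taut (p : PropForm) : Prop := ∀ v, p.eval v = true

def PropForm.subst (σ : ℕ → Formula Ag Pred Conn Act) : PropForm → Formula Ag Pred Conn Act
  | .var n => σ n
  | .neg p => Formula.neg (p.subst σ)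
  | .and p q => Formula.and (p.subst σ) (q.subst σ)

/-- A KBL formula that is a substitution instance of a propositional tautology. -/
def Formula.IsTautInstance (φ : Formula Ag Pred Conn Act) : Prop :=
  ∃ (p : PropForm) (σ : ℕ → Formula Ag Pred Conn Act), p.Taut ∧ p.subst σ = φ

/-- KD4-derivability `Γ ⊢ φ`: assumptions, propositional tautologies (A1),
distribution (A2), positive introspection (A4), consistency (D, with falsum
taken as a contradictory formula `φ ∧ ¬φ`), modus ponens (R1) and
necessitation from the empty set of assumptions (R2). -/
inductive Deriv : Set (Formula Ag Pred Conn Act) → Formula Ag Pred Conn Act → Prop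
  | mem {Γ} {φ : Formula Ag Pred Conn Act} : φ ∈ Γ → Deriv Γ φ
  | taut {Γ} {φ : Formula Ag Pred Conn Act} : φ.IsTautInstance → Deriv Γ φ
  | a2 (Γ) (i : Ag) (φ ψ : Formula Ag Pred Conn Act) :
      Deriv Γ (Formula.imp
        (Formula.and (Formula.know i φ) (Formula.know i (Formula.imp φ ψ)))
        (Formula.know i ψ))
  | a4 (Γ) (i : Ag) (φ : Formula Ag Pred Conn Act) :
      Deriv Γ (Formula.imp (Formula.know i φ) (Formula.know i (Formula.know i φ)))
  | dax (Γ) (i : Ag) (φ : Formula Ag Pred Conn Act) :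
      Deriv Γ (Formula.neg (Formula.know i (Formula.and φ (Formula.neg φ))))
  | mp {Γ} {φ ψ : Formula Ag Pred Conn Act} :
      Deriv Γ (Formula.imp φ ψ) → Deriv Γ φ → Deriv Γ ψ
  | nec (Γ) (i : Ag) {φ : Formula Ag Pred Conn Act} :
      Deriv (∅ : Set (Formula Ag Pred Conn Act)) φ → Deriv Γ (Formula.know i φ)

/-- A social network model: connection relations, permitted-action relations,
a finite knowledge base for every agent, and the environment's knowledge base
(the set of true atomic predicates). -/
structure SNM (Ag Pred Conn Act : Type) where
  conn : Conn → Ag → Ag → Prop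
  act : Act → Ag → Ag → Prop
  KB : Ag → Finset (Formula Ag Pred Conn Act)
  KBe : Finset Pred

/-- Satisfaction of a KBL formula in a social network model. -/
def SNM.Sat (SN : SNM Ag Pred Conn Act) : Formula Ag Pred Conn Act → Prop
  | .atom p => p ∈ SN.KBe
  | .conn m i j => SN.conn m i j
  | .act n i j => SN.act n i j
  | .neg φ => ¬ SN.Sat φ
  | .and φ ψ => SN.Sat φ ∧ SN.Sat ψ
  | .know i φ => Deriv (↑(SN.KB i) : Set (Formula Ag Pred Conn Act)) φ

/-- Knowledge consistency of the knowledge bases of an SNM. -/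
def SNM.KnowConsistent (SN : SNM Ag Pred Conn Act) : Prop :=
  ∀ (i : Ag) (φ : Formula Ag Pred Conn Act),
    Deriv (↑(SN.KB i) : Set (Formula Ag Pred Conn Act)) φ →
    ¬ Deriv (↑(SN.KB i) : Set (Formula Ag Pred Conn Act)) (Formula.neg φ)

/-- Self-awareness of the knowledge bases of an SNM. -/
def SNM.SelfAware (SN : SNM Ag Pred Conn Act) : Prop :=
  ∀ (i : Ag) (φ : Formula Ag Pred Conn Act),
    Deriv (↑(SN.KB i) : Set (Formula Ag Pred Conn Act)) φ →
    Deriv (↑(SN.KB i) : Set (Formula Ag Pred Conn Act)) (Formula.know i φ)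

/-- Conjunction of a nonempty list of formulas (head `a`, tail `l`). -/
def conjNE (a : Formula Ag Pred Conn Act) (l : List (Formula Ag Pred Conn Act)) :
    Formula Ag Pred Conn Act :=
  l.foldl Formula.and a

/-- The characteristic set `Φ_SN` of a social network model. -/
def SNM.CharSet (SN : SNM Ag Pred Conn Act) : Set (Formula Ag Pred Conn Act) :=
  {ψ | ∃ p ∈ SN.KBe, ψ = Formula.atom p} ∪
  {ψ | ∃ (i : Ag) (φ : Formula Ag Pred Conn Act), φ ∈ SN.KB i ∧ ψ = Formula.know i φ} ∪
  {ψ | ∃ (m : Conn) (i j : Ag), SN.conn m i j ∧ ψ = Formula.conn m i j} ∪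
  {ψ | ∃ (n : Act) (i j : Ag), SN.act n i j ∧ ψ = Formula.act n i j}

/-- A formula is KD4-consistent when its negation is not derivable from no
assumptions. -/
def KD4Consistent (φ : Formula Ag Pred Conn Act) : Prop :=
  ¬ Deriv (∅ : Set (Formula Ag Pred Conn Act)) (Formula.neg φ)

/-- A set of formulas is KD4-consistent when no contradiction is derivable from it. -/
def SetKD4Consistent (Γ : Set (Formula Ag Pred Conn Act)) : Prop :=
  ∀ ψ : Formula Ag Pred Conn Act, ¬ (Deriv Γ ψ ∧ Deriv Γ (Formula.neg ψ))

/-- Subformulas of a formula (including the formula itself). -/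
def Formula.sub : Formula Ag Pred Conn Act → Set (Formula Ag Pred Conn Act)
  | .atom p => {Formula.atom p}
  | .conn m i j => {Formula.conn m i j}
  | .act n i j => {Formula.act n i j}
  | .neg φ => insert (Formula.neg φ) φ.sub
  | .and φ ψ => insert (Formula.and φ ψ) (φ.sub ∪ ψ.sub)
  | .know i φ => insert (Formula.know i φ) φ.sub

/-- `Sub⁺(φ)`: subformulas of `φ` together with their negations. -/
def SubPlus (φ : Formula Ag Pred Conn Act) : Set (Formula Ag Pred Conn Act) :=
  φ.sub ∪ (Formula.neg '' φ.sub)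

/-- `Con(φ)` (named `ConKD4`): maximal KD4-consistent subsets of `Sub⁺(φ)`. -/
def ConKD4 (φ : Formula Ag Pred Conn Act) : Set (Set (Formula Ag Pred Conn Act)) :=
  {Θ | Θ ⊆ SubPlus φ ∧ SetKD4Consistent Θ ∧
    ∀ ψ ∈ SubPlus φ, ψ ∉ Θ → ¬ SetKD4Consistent (insert ψ Θ)}

/-- `Θ/K_i = {ψ | K_i ψ ∈ Θ}`. -/
def projK (i : Ag) (Θ : Set (Formula Ag Pred Conn Act)) : Set (Formula Ag Pred Conn Act) :=
  {ψ | Formula.know i ψ ∈ Θ}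

/-- Kripke models: states, a valuation assigning truth values of atomic
formulas at each state, and accessibility relations. -/
structure Kripke (Ag Pred Conn Act : Type) where
  State : Type
  val : State → Formula Ag Pred Conn Act → Prop
  acc : Ag → State → State → Prop

/-- The canonical Kripke model `M_φ` of a (KD4-consistent) formula `φ`. -/
def canonical (φ : Formula Ag Pred Conn Act) : Kripke Ag Pred Conn Act where
  State := {Θ : Set (Formula Ag Pred Conn Act) // Θ ∈ ConKD4 φ}
  val := fun s ψ => ψ ∈ s.1
  acc := fun i s t => projK i s.1 ⊆ projK i t.1 ∧ projK i s.1 ⊆ t.1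

/-- Satisfaction of a formula at a state of a Kripke model. -/
def KSat (M : Kripke Ag Pred Conn Act) : M.State → Formula Ag Pred Conn Act → Prop
  | s, .atom p => M.val s (Formula.atom p)
  | s, .conn m i j => M.val s (Formula.conn m i j)
  | s, .act n i j => M.val s (Formula.act n i j)
  | s, .neg ψ => ¬ KSat M s ψ
  | s, .and ψ χ => KSat M s ψ ∧ KSat M s χ
  | s, .know i ψ => ∀ t, M.acc i s t → KSat M t ψ

/-- Length (number of symbols) of a formula; atoms count as one symbol. -/
def Formula.len : Formula Ag Pred Conn Act → ℕ
  | .atom _ => 1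
  | .conn _ _ _ => 1
  | .act _ _ _ => 1
  | .neg φ => φ.len + 1
  | .and φ ψ => φ.len + ψ.len + 1
  | .know _ φ => φ.len + 1

/-- `outerK(φ)`: the subformulas of `φ` of the form `K_i ψ` that are not under
the scope of any knowledge modality. -/
def outerK : Formula Ag Pred Conn Act → List (Formula Ag Pred Conn Act)
  | .neg φ => outerK φ
  | .and φ ψ => outerK φ ++ outerK ψ
  | .know i φ => [Formula.know i φ]
  | .atom _ => []
  | .conn _ _ _ => []
  | .act _ _ _ => []

/-- The length of the conjunction of the formulas of a list: the lengths of
the conjuncts plus one symbol for each `∧`. -/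
def conjLen (l : List (Formula Ag Pred Conn Act)) : ℕ :=
  (l.map Formula.len).sum + (l.length - 1)


/-- A naive Boolean evaluation collapsing `K_i` (soundness model for KD4 from
no assumptions). -/
def ev (b : Pred → Bool) : Formula Ag Pred Conn Act → Bool
  | .atom p => b p
  | .conn _ _ _ => true
  | .act _ _ _ => true
  | .neg φ => !(ev b φ)
  | .and φ ψ => ev b φ && ev b ψ
  | .know _ φ => ev b φ

lemma ev_subst (b : Pred → Bool) (σ : ℕ → Formula Ag Pred Conn Act) (p : PropForm) :
    ev b (p.subst σ) = p.eval (fun n => ev b (σ n)) := by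
  induction p with
  | var n => rfl
  | neg p ih => simp [PropForm.subst, PropForm.eval, ev, ih]
  | and p q ih1 ih2 => simp [PropForm.subst, PropForm.eval, ev, ih1, ih2]

lemma ev_sound (b : Pred → Bool) {Γ : Set (Formula Ag Pred Conn Act)}
    {φ : Formula Ag Pred Conn Act} (h : Deriv Γ φ)
    (hΓ : ∀ ψ ∈ Γ, ev b ψ = true) : ev b φ = true := by
  induction h with
  | mem hm => exact hΓ _ hm
  | taut ht =>
    obtain ⟨p, σ, hp, rfl⟩ := ht
    rw [ev_subst]; exact hp _
  | a2 Γ i φ ψ =>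
    simp only [Formula.imp, ev]
    cases h1 : ev b φ <;> cases h2 : ev b ψ <;> simp [h1, h2]
  | a4 Γ i φ => simp [Formula.imp, ev]
  | dax Γ i φ => simp [Formula.imp, ev]
  | mp h1 h2 ih1 ih2 =>
    have e1 := ih1 hΓ
    have e2 := ih2 hΓ
    simp only [Formula.imp, ev, e2, Bool.true_and, Bool.not_not] at e1
    exact e1
  | nec Γ i h ih =>
    simpa [ev] using ih (by simp)

/-- negative introspection A5 is not sound w.r.t. SNMs: there
are an SNM (knowledge-consistent and self-aware), an agent `i` and a formula
`φ` such that `SN ⊭ ¬K_i φ → K_i ¬K_i φ`. -/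
theorem axiomA5_not_sound :
    ∃ (Ag Pred Conn Act : Type) (SN : SNM Ag Pred Conn Act)
      (i : Ag) (φ : Formula Ag Pred Conn Act),
      SN.KnowConsistent ∧ SN.SelfAware ∧
      ¬ SN.Sat (Formula.imp (Formula.neg (Formula.know i φ))
          (Formula.know i (Formula.neg (Formula.know i φ)))) := by
    classical
  refine ⟨Unit, Unit, Unit, Unit,
    { conn := fun _ _ _ => True, act := fun _ _ _ => True,
      KB := fun _ => ∅, KBe := ∅ }, (), Formula.atom (), ?_, ?_, ?_⟩
  · intro i φ h hn
    have h1 := ev_sound (fun _ => true) h (by simp)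
    have h2 := ev_sound (fun _ => true) hn (by simp)
    simp [ev, h1] at h2
  · intro i φ h
    simp only [Finset.coe_empty] at h ⊢
    exact Deriv.nec _ _ h
  · intro hsat
    simp only [Formula.imp, SNM.Sat, not_not, Finset.coe_empty] at hsat
    apply hsat
    constructor
    · exact fun h => absurd (ev_sound (fun _ => false) h (by simp)) (by simp [ev])
    · exact fun h => absurd (ev_sound (fun _ => true) h (by simp)) (by simp [ev])
end

section
/- The axiom system KD4 is sound with respect to social network models: if a KBL formula φ is KD4-derivable from no assumptions (∅ ⊢ φ), then SN ⊨ φ for every social network model SN (whose knowledge bases satisfy knowledge consistency and self-awareness). -/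
variable {Ag Pred Conn Act : Type}

/-! Soundness is proved for derivations from arbitrary assumptions that hold in `SN`, by
induction on the derivation. Each modal rule matches a property of `SN`: A2 is closure of
`KB_i`-derivability under modus ponens, A4 is self-awareness, D is knowledge consistency, and
R2 holds because a derivation from no assumptions is also one from `KB_i`. -/

lemma SNM.sat_imp (SN : SNM Ag Pred Conn Act) {φ ψ : Formula Ag Pred Conn Act} :
    SN.Sat (φ.imp ψ) ↔ (SN.Sat φ → SN.Sat ψ) := by
  simp only [Formula.imp, SNM.Sat, not_and, not_not]

open Classical in
lemma SNM.eval_iff_sat_subst (SN : SNM Ag Pred Conn Act) (σ : ℕ → Formula Ag Pred Conn Act) :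
    ∀ p : PropForm, p.eval (fun n => decide (SN.Sat (σ n))) = true ↔ SN.Sat (p.subst σ)
  | .var n => by simp [PropForm.eval, PropForm.subst]
  | .neg p => by
    simp [PropForm.eval, PropForm.subst, SNM.Sat, ← SN.eval_iff_sat_subst σ p]
  | .and p q => by
    simp [PropForm.eval, PropForm.subst, SNM.Sat, SN.eval_iff_sat_subst σ p,
      SN.eval_iff_sat_subst σ q]

lemma SNM.sat_of_isTautInstance (SN : SNM Ag Pred Conn Act) {φ : Formula Ag Pred Conn Act}
    (h : φ.IsTautInstance) : SN.Sat φ := by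
  obtain ⟨p, σ, hp, rfl⟩ := h
  classical
  exact (SN.eval_iff_sat_subst σ p).mp (hp _)

lemma Deriv.mono {Γ Δ : Set (Formula Ag Pred Conn Act)} {φ : Formula Ag Pred Conn Act}
    (h : Deriv Γ φ) (hΓΔ : Γ ⊆ Δ) : Deriv Δ φ := by
  induction h generalizing Δ with
  | mem hφ => exact .mem (hΓΔ hφ)
  | taut hφ => exact .taut hφ
  | a2 _ i φ ψ => exact .a2 _ i φ ψ
  | a4 _ i φ => exact .a4 _ i φ
  | dax _ i φ => exact .dax _ i φ
  | mp _ _ ihimp ih => exact .mp (ihimp hΓΔ) (ih hΓΔ)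
  | nec _ i h _ => exact .nec _ i h

lemma Deriv.and_left {Γ : Set (Formula Ag Pred Conn Act)} {φ ψ : Formula Ag Pred Conn Act}
    (h : Deriv Γ (φ.and ψ)) : Deriv Γ φ := by
  refine .mp (.taut ⟨.neg (.and (.and (.var 0) (.var 1)) (.neg (.var 0))),
    fun n => if n = 0 then φ else ψ, ?_, rfl⟩) h
  intro v
  simp only [PropForm.eval]
  cases v 0 <;> cases v 1 <;> rfl

lemma Deriv.and_right {Γ : Set (Formula Ag Pred Conn Act)} {φ ψ : Formula Ag Pred Conn Act}
    (h : Deriv Γ (φ.and ψ)) : Deriv Γ ψ := by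
  refine .mp (.taut ⟨.neg (.and (.and (.var 0) (.var 1)) (.neg (.var 1))),
    fun n => if n = 0 then φ else ψ, ?_, rfl⟩) h
  intro v
  simp only [PropForm.eval]
  cases v 0 <;> cases v 1 <;> rfl

lemma SNM.sat_of_deriv (SN : SNM Ag Pred Conn Act) (hcons : SN.KnowConsistent)
    (hself : SN.SelfAware) {Γ : Set (Formula Ag Pred Conn Act)} {φ : Formula Ag Pred Conn Act}
    (h : Deriv Γ φ) (hΓ : ∀ γ ∈ Γ, SN.Sat γ) : SN.Sat φ := by
  induction h with
  | mem hφ => exact hΓ _ hφ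
  | taut hφ => exact SN.sat_of_isTautInstance hφ
  | a2 _ i φ ψ => exact SN.sat_imp.mpr fun ⟨hφ, himp⟩ => .mp himp hφ
  | a4 _ i φ => exact SN.sat_imp.mpr (hself i φ)
  | dax _ i φ => exact fun hbot => hcons i φ hbot.and_left hbot.and_right
  | mp _ _ ihimp ih => exact SN.sat_imp.mp (ihimp hΓ) (ih hΓ)
  | nec _ i h _ => exact h.mono (Set.empty_subset _)

/-- soundness of KD4 w.r.t. SNMs: every formula KD4-derivable
from no assumptions is satisfied in every SNM whose knowledge bases are
knowledge-consistent and self-aware. -/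
theorem KD4_sound
    {Ag Pred Conn Act : Type} (SN : SNM Ag Pred Conn Act)
    (hcons : SN.KnowConsistent) (hself : SN.SelfAware)
    (φ : Formula Ag Pred Conn Act)
    (h : Deriv (∅ : Set (Formula Ag Pred Conn Act)) φ) :
    SN.Sat φ :=
  SN.sat_of_deriv hcons hself h fun _ hγ => hγ.elim
end
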